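/- arXiv:1103.3372 — 4 statements merged into one kernel-verified Lean document; each statement's English description precedes it below -/
import Mathlib

section
/- Let E = ℝⁿ, let f : E → E be a C^∞ vector field with f(0) = 0, let U ⊆ E be an open set containing 0, and let V : E → ℝ be C^∞. Define the iterated Lie derivatives L⁰_f V = V and L^k_f V(x) = D(L^{k-1}_f V)(x)(f(x)) for k ≥ 1. Suppose (a) V(0) = 0; (b) V(x) > 0 for all x ∈ U \ {0}; (c) for every x ∈ U \ {0} there exists k ≥ 1 such that L^j_f V(x) = 0 for all 1 ≤ j < k and L^k_f V(x) < 0. Then 0 is an asymptotically stable equilibrium: (i) for every ε > 0 there exists δ > 0 such that every solution x : [0,∞) → E of x' = f(x) with ‖x(0)‖ < δ satisfies ‖x(t)‖ < ε for all t ≥ 0; and (ii) there exists δ > 0 such that every solution x : [0,∞) → E of x' = f(x) with ‖x(0)‖ < δ satisfies x(t) → 0 as t → ∞. -/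
open Filter Topology

/-- Iterated Lie derivative of a function `V : ℝⁿ → ℝ` along a vector field `f`:
`L⁰_f V = V` and `L^{k+1}_f V x = D(L^k_f V)(x)(f x)`. -/
noncomputable def lieD {n : ℕ} (f : EuclideanSpace ℝ (Fin n) → EuclideanSpace ℝ (Fin n))
    (V : EuclideanSpace ℝ (Fin n) → ℝ) : ℕ → EuclideanSpace ℝ (Fin n) → ℝ
  | 0 => V
  | k + 1 => fun x => fderiv ℝ (lieD f V k) x (f x)

open Metric Set

section auxiliary

variable {n : ℕ} {f : EuclideanSpace ℝ (Fin n) → EuclideanSpace ℝ (Fin n)}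
  {V : EuclideanSpace ℝ (Fin n) → ℝ}

lemma lieD_contDiff (hf : ContDiff ℝ (⊤ : ℕ∞) f) (hV : ContDiff ℝ (⊤ : ℕ∞) V) :
    ∀ k, ContDiff ℝ (⊤ : ℕ∞) (lieD f V k) := by
  intro k
  induction k with
  | zero => exact hV
  | succ k ih =>
    show ContDiff ℝ (⊤ : ℕ∞) fun x => fderiv ℝ (lieD f V k) x (f x)
    exact (ih.fderiv_right (by simp)).clm_apply hf

lemma lieD_hasDerivAt (hf : ContDiff ℝ (⊤ : ℕ∞) f) (hV : ContDiff ℝ (⊤ : ℕ∞) V)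
    {x : ℝ → EuclideanSpace ℝ (Fin n)} {t : ℝ} (hx : HasDerivAt x (f (x t)) t) (k : ℕ) :
    HasDerivAt (fun s => lieD f V k (x s)) (lieD f V (k + 1) (x t)) t := by
  have h1 : HasFDerivAt (lieD f V k) (fderiv ℝ (lieD f V k) (x t)) (x t) :=
    ((lieD_contDiff hf hV k).differentiable (by simp) (x t)).hasFDerivAt
  exact h1.comp_hasDerivAt t hx


/-- If `h' ≤ φ'` on `[a,b]` then `h b - h a ≤ φ b - φ a`. -/
lemma deriv_le_imp_le {a b : ℝ} (hab : a ≤ b) {h φ h' φ' : ℝ → ℝ}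
    (hh : ∀ t ∈ Icc a b, HasDerivAt h (h' t) t)
    (hφ : ∀ t ∈ Icc a b, HasDerivAt φ (φ' t) t)
    (hle : ∀ t ∈ Icc a b, h' t ≤ φ' t) : h b - h a ≤ φ b - φ a := by
  have hmono : MonotoneOn (fun t => φ t - h t) (Icc a b) := by
    apply monotoneOn_of_deriv_nonneg (convex_Icc a b)
    · exact fun t ht => ((hφ t ht).sub (hh t ht)).continuousAt.continuousWithinAt
    · intro t ht
      have ht' : t ∈ Icc a b := interior_subset ht
      exact (((hφ t ht').sub (hh t ht')).differentiableAt).differentiableWithinAt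
    · intro t ht
      have ht' : t ∈ Icc a b := interior_subset ht
      rw [show (fun t => φ t - h t) = φ - h from rfl, ((hφ t ht').sub (hh t ht')).deriv]
      linarith [hle t ht']
  have := hmono (left_mem_Icc.2 hab) (right_mem_Icc.2 hab) hab
  simp only at this
  linarith

/-- Integration step: bound a function given an exp/power bound on its derivative. -/
lemma integrate_step {t₀ s η c : ℝ} {i : ℕ} (hs : 0 ≤ s) {h h' : ℝ → ℝ}
    (hh : ∀ u ∈ Icc t₀ (t₀ + s), HasDerivAt h (h' u) u)
    (hbound : ∀ u ∈ Icc t₀ (t₀ + s),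
      h' u ≤ η * Real.exp (u - t₀) - c * (u - t₀) ^ i / (i.factorial : ℝ)) :
    h (t₀ + s) ≤ h t₀ + η * (Real.exp s - 1) - c * s ^ (i + 1) / ((i + 1).factorial : ℝ) := by
  set φ : ℝ → ℝ := fun u => η * Real.exp (u - t₀) - c * (u - t₀) ^ (i + 1) / ((i+1).factorial : ℝ)
    with hφdef
  have hφ : ∀ u ∈ Icc t₀ (t₀ + s), HasDerivAt φ
      (η * Real.exp (u - t₀) - c * (u - t₀) ^ i / (i.factorial : ℝ)) u := by
    intro u _
    have h1 : HasDerivAt (fun u : ℝ => u - t₀) 1 u := (hasDerivAt_id u).sub_const t₀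
    have h2 : HasDerivAt (fun u : ℝ => Real.exp (u - t₀)) (Real.exp (u - t₀) * 1) u :=
      by have := (Real.hasDerivAt_exp (u - t₀)).comp u h1; exact this
    have h3 : HasDerivAt (fun u : ℝ => (u - t₀) ^ (i + 1))
        ((↑(i+1) * (u - t₀) ^ i) * 1) u := (h1.pow (i+1))
    have h4 := (h2.const_mul η).sub ((h3.const_mul c).div_const ((i+1).factorial : ℝ))
    refine h4.congr_deriv ?_
    have hfac : ((i+1).factorial : ℝ) = (i+1) * (i.factorial : ℝ) := by
      rw [Nat.factorial_succ]; push_cast; ring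
    have hipos : (i.factorial : ℝ) ≠ 0 := by positivity
    rw [hfac]
    field_simp
    push_cast
    ring
  have key := deriv_le_imp_le (by linarith : t₀ ≤ t₀ + s) hh hφ hbound
  have hφa : φ t₀ = η := by
    simp [hφdef, sub_self, Real.exp_zero, zero_pow (Nat.succ_ne_zero i)]
  have hφb : φ (t₀ + s) = η * Real.exp s - c * s ^ (i+1) / ((i+1).factorial : ℝ) := by
    simp [hφdef, add_sub_cancel_left]
  rw [hφa, hφb] at key
  linarith

/-- Quantitative Taylor-type drop estimate for a derivative chain `G`. -/
lemma taylor_drop {G : ℕ → ℝ → ℝ} {k : ℕ} (hk : 1 ≤ k) {t₀ S c η : ℝ} (hS : 0 ≤ S)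
    (hc : 0 ≤ c) (hη : 0 ≤ η)
    (hderiv : ∀ j < k, ∀ t ∈ Icc t₀ (t₀ + S), HasDerivAt (G j) (G (j+1) t) t)
    (hmid : ∀ j, 1 ≤ j → j < k → |G j t₀| ≤ η)
    (hkneg : ∀ t ∈ Icc t₀ (t₀ + S), G k t ≤ -c) :
    G 0 (t₀ + S) ≤ G 0 t₀ + η * (Real.exp S - 1) - c * S ^ k / (k.factorial : ℝ) := by
  have core : ∀ i j, j + i = k → 1 ≤ j → ∀ s ∈ Icc 0 S,
      G j (t₀ + s) ≤ η * Real.exp s - c * s ^ i / (i.factorial : ℝ) := by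
    intro i
    induction i with
    | zero =>
      intro j hj _ s hs
      obtain rfl : j = k := by omega
      have h1 : t₀ + s ∈ Icc t₀ (t₀ + S) := ⟨by linarith [hs.1], by linarith [hs.2]⟩
      have h2 := hkneg _ h1
      have h3 : 0 ≤ η * Real.exp s := by positivity
      simp only [pow_zero, Nat.factorial_zero, Nat.cast_one]
      linarith
    | succ i ih =>
      intro j hj hj1 s hs
      have hjk : j < k := by omega
      have step := integrate_step (i := i) hs.1
        (h := G j) (h' := G (j+1))
        (fun u hu => hderiv j hjk u ⟨hu.1, by linarith [hu.2, hs.2]⟩)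
        (fun u hu => by
          have hu' : u - t₀ ∈ Icc (0:ℝ) S := ⟨by linarith [hu.1], by linarith [hu.2, hs.2]⟩
          have := ih (j+1) (by omega) (by omega) (u - t₀) hu'
          rwa [add_sub_cancel] at this)
      have hmidj := hmid j hj1 hjk
      have : G j t₀ ≤ η := le_trans (le_abs_self _) hmidj
      have hexp : (1:ℝ) ≤ Real.exp s := Real.one_le_exp hs.1
      linarith
  obtain ⟨k', rfl⟩ : ∃ k', k = k' + 1 := ⟨k - 1, (Nat.succ_pred_eq_of_pos hk).symm⟩
  have step := integrate_step (i := k') hS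
    (h := G 0) (h' := G 1)
    (fun u hu => hderiv 0 (by omega) u hu)
    (fun u hu => by
      have hu' : u - t₀ ∈ Icc (0:ℝ) S := ⟨by linarith [hu.1], by linarith [hu.2]⟩
      have := core k' 1 (by omega) le_rfl (u - t₀) hu'
      rwa [add_sub_cancel] at this)
  exact step

/-- If `g` is continuous on `[a,b]` and locally eventually `≤ g a` to the right of any point
where `g ≤ g a`, then `g ≤ g a` on all of `[a,b]`. -/
lemma forward_le {g : ℝ → ℝ} {a b : ℝ} (hab : a ≤ b)
    (hg : ∀ t ∈ Icc a b, ContinuousAt g t)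
    (hloc : ∀ t ∈ Ico a b, g t ≤ g a → ∃ ε > 0, ∀ s ∈ Ioc t (min b (t + ε)), g s ≤ g a) :
    ∀ t ∈ Icc a b, g t ≤ g a := by
  set S : Set ℝ := {t | t ∈ Icc a b ∧ ∀ s ∈ Icc a t, g s ≤ g a} with hSdef
  have haS : a ∈ S := ⟨⟨le_rfl, hab⟩, fun s hs => by
    obtain rfl : s = a := le_antisymm hs.2 hs.1; exact le_rfl⟩
  have hSne : S.Nonempty := ⟨a, haS⟩
  have hSbdd : BddAbove S := ⟨b, fun t ht => ht.1.2⟩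
  set c := sSup S with hcdef
  have hac : a ≤ c := le_csSup hSbdd haS
  have hcb : c ≤ b := csSup_le hSne fun t ht => ht.1.2
  have hcS : ∀ s ∈ Icc a c, g s ≤ g a := by
    intro s hs
    rcases lt_or_eq_of_le hs.2 with hlt | heq
    · obtain ⟨t, htS, hst⟩ := exists_lt_of_lt_csSup hSne hlt
      exact htS.2 s ⟨hs.1, hst.le⟩
    · subst heq
      rcases eq_or_lt_of_le hs.1 with heq2 | hlt2
      · rw [← heq2]
      · -- s = c > a : use continuity from the left
        have hne : (𝓝[<] c).NeBot := nhdsLT_neBot c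
        have htend : Tendsto g (𝓝[<] c) (𝓝 (g c)) :=
          ((hg c ⟨hs.1, hcb⟩).tendsto).mono_left nhdsWithin_le_nhds
        refine le_of_tendsto htend ?_
        filter_upwards [Ioo_mem_nhdsLT_of_mem ⟨hlt2, le_rfl⟩] with u hu
        obtain ⟨t, htS, hut⟩ := exists_lt_of_lt_csSup hSne hu.2
        exact htS.2 u ⟨hu.1.le, hut.le⟩
  have hcb' : c = b := by
    by_contra hne
    have hclt : c < b := lt_of_le_of_ne hcb hne
    obtain ⟨ε, hε, hdec⟩ := hloc c ⟨hac, hclt⟩ (hcS c ⟨hac, le_rfl⟩)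
    set c' := min b (c + ε) with hc'def
    have hcc' : c < c' := lt_min hclt (by linarith)
    have hc'S : c' ∈ S := by
      refine ⟨⟨by linarith, min_le_left _ _⟩, fun s hs => ?_⟩
      rcases le_or_gt s c with h1 | h1
      · exact hcS s ⟨hs.1, h1⟩
      · exact hdec s ⟨h1, hs.2⟩
    have := le_csSup hSbdd hc'S
    rw [← hcdef] at this
    linarith
  intro t ht
  exact hcS t ⟨ht.1, hcb' ▸ ht.2⟩

end auxiliary

section traj
variable {n : ℕ} {f : EuclideanSpace ℝ (Fin n) → EuclideanSpace ℝ (Fin n)}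
  {V : EuclideanSpace ℝ (Fin n) → ℝ} {U : Set (EuclideanSpace ℝ (Fin n))}

/-- Local forward decrease of `V` along a trajectory at points of `U \ {0}`. -/
lemma local_decrease (hf : ContDiff ℝ (⊤ : ℕ∞) f) (hV : ContDiff ℝ (⊤ : ℕ∞) V)
    (hc : ∀ x ∈ U, x ≠ 0 → ∃ k, 1 ≤ k ∧
      (∀ j, 1 ≤ j → j < k → lieD f V j x = 0) ∧ lieD f V k x < 0)
    {x : ℝ → EuclideanSpace ℝ (Fin n)}
    (hx : ∀ t : ℝ, 0 ≤ t → HasDerivAt x (f (x t)) t)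
    {t : ℝ} (ht : 0 ≤ t) (hxtU : x t ∈ U) (hxt0 : x t ≠ 0) :
    ∃ ε > 0, ∀ s ∈ Ioc t (t + ε), V (x s) ≤ V (x t) := by
  obtain ⟨k, hk1, hzero, hneg⟩ := hc (x t) hxtU hxt0
  set L := lieD f V k (x t) with hLdef
  have hW : IsOpen ((lieD f V k) ⁻¹' Iio (L / 2)) :=
    (isOpen_Iio).preimage ((lieD_contDiff hf hV k).continuous)
  have hxtW : x t ∈ (lieD f V k) ⁻¹' Iio (L / 2) := by
    simp only [mem_preimage, mem_Iio]; linarith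
  have hcont : ContinuousAt x t := (hx t ht).continuousAt
  have hev : ∀ᶠ s in 𝓝 t, x s ∈ (lieD f V k) ⁻¹' Iio (L / 2) :=
    hcont.eventually_mem (hW.mem_nhds hxtW)
  obtain ⟨ε, hε, hball⟩ := Metric.eventually_nhds_iff_ball.1 hev
  refine ⟨ε / 2, by linarith, fun s hs => ?_⟩
  have hS0 : 0 ≤ s - t := by linarith [hs.1]
  have hmem : ∀ u ∈ Icc t (t + (s - t)), x u ∈ (lieD f V k) ⁻¹' Iio (L / 2) := by
    intro u hu
    apply hball
    rw [mem_ball, Real.dist_eq, abs_lt]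
    constructor <;> [linarith [hu.1]; linarith [hu.2, hs.2]]
  have hdrop := taylor_drop (G := fun j u => lieD f V j (x u)) (t₀ := t) (S := s - t) hk1 hS0
    (c := -(L / 2)) (by linarith) (le_refl (0:ℝ))
    (fun j _ u hu => lieD_hasDerivAt hf hV (hx u (by linarith [hu.1])) j)
    (fun j hj1 hjk => by show |lieD f V j (x t)| ≤ 0; rw [hzero j hj1 hjk]; simp)
    (fun u hu => by
      have := hmem u hu; simp only [mem_preimage, mem_Iio] at this
      show lieD f V k (x u) ≤ -(-(L / 2)); linarith)
  have hdrop2 : V (x (t + (s - t))) ≤ V (x t) + 0 * (Real.exp (s - t) - 1)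
      - -(L / 2) * (s - t) ^ k / (k.factorial : ℝ) := hdrop
  have heq : t + (s - t) = s := by ring
  rw [heq] at hdrop2
  have hpow : 0 ≤ (s - t) ^ k / (k.factorial : ℝ) := by positivity
  have hterm : 0 ≤ -(L / 2) * (s - t) ^ k / (k.factorial : ℝ) := by
    rw [mul_div_assoc]; exact mul_nonneg (by linarith) hpow
  linarith

/-- `V` along a trajectory staying in `U` never exceeds its initial value. -/
lemma V_le_initial (hf : ContDiff ℝ (⊤ : ℕ∞) f) (hV : ContDiff ℝ (⊤ : ℕ∞) V) (ha : V 0 = 0)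
    (hb : ∀ x ∈ U, x ≠ 0 → 0 < V x)
    (hc : ∀ x ∈ U, x ≠ 0 → ∃ k, 1 ≤ k ∧
      (∀ j, 1 ≤ j → j < k → lieD f V j x = 0) ∧ lieD f V k x < 0)
    {x : ℝ → EuclideanSpace ℝ (Fin n)}
    (hx : ∀ t : ℝ, 0 ≤ t → HasDerivAt x (f (x t)) t)
    {a b : ℝ} (h0a : 0 ≤ a) (hab : a ≤ b)
    (hxU : ∀ s ∈ Icc a b, x s ∈ U) :
    ∀ t ∈ Icc a b, V (x t) ≤ V (x a) := by
  by_contra hcon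
  push_neg at hcon
  obtain ⟨t₁, ht₁, hgt⟩ := hcon
  set g : ℝ → ℝ := fun t => V (x t) with hgdef
  have hgc : ∀ t, 0 ≤ t → ContinuousAt g t := fun t ht =>
    (hV.continuous.continuousAt).comp (hx t ht).continuousAt
  have hga0 : 0 ≤ g a := by
    by_cases h : x a = 0
    · simp [hgdef, h, ha]
    · exact (hb (x a) (hxU a ⟨le_rfl, hab⟩) h).le
  set Z : Set ℝ := Icc a t₁ ∩ g ⁻¹' Iic (g a) with hZdef
  have hZclosed : IsClosed Z := by
    apply ContinuousOn.preimage_isClosed_of_isClosed ?_ isClosed_Icc isClosed_Iic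
    exact fun u hu => (hgc u (le_trans h0a hu.1)).continuousWithinAt
  have haZ : a ∈ Z := ⟨⟨le_rfl, ht₁.1⟩, by simp⟩
  have hZne : Z.Nonempty := ⟨a, haZ⟩
  have hZbdd : BddAbove Z := ⟨t₁, fun u hu => hu.1.2⟩
  set ts := sSup Z with htsdef
  have htsZ : ts ∈ Z := hZclosed.csSup_mem hZne hZbdd
  have hts1 : g ts ≤ g a := htsZ.2
  have hats : a ≤ ts := le_csSup hZbdd haZ
  have htst1 : ts < t₁ := by
    rcases lt_or_eq_of_le htsZ.1.2 with h | h
    · exact h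
    · exfalso; rw [hgdef] at hts1; rw [h] at hts1; linarith
  have hpos : ∀ u ∈ Ioc ts t₁, g a < g u := by
    intro u hu
    by_contra hle
    push_neg at hle
    have huZ : u ∈ Z := ⟨⟨by linarith [hu.1], hu.2⟩, hle⟩
    have := le_csSup hZbdd huZ
    rw [← htsdef] at this
    linarith [hu.1]
  have hmain : ∀ u₀ ∈ Ioc ts t₁, g t₁ ≤ g u₀ := by
    intro u₀ hu₀
    have h0u₀ : (0:ℝ) ≤ u₀ := by linarith [hu₀.1, h0a, hats]
    have := forward_le (g := g) (a := u₀) (b := t₁) hu₀.2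
      (fun t ht => hgc t (by linarith [ht.1]))
      (fun t ht hle => by
        have htIoc : t ∈ Ioc ts t₁ := ⟨lt_of_lt_of_le hu₀.1 ht.1, ht.2.le⟩
        have htU : x t ∈ U := hxU t ⟨by linarith [htIoc.1, hats], by linarith [htIoc.2, ht₁.2]⟩
        have ht0 : x t ≠ 0 := by
          intro hzz
          have : g t = 0 := by simp [hgdef, hzz, ha]
          have := hpos t htIoc
          linarith
        obtain ⟨ε, hε, hdec⟩ := local_decrease hf hV hc hx (by linarith [ht.1]) htU ht0
        exact ⟨ε, hε, fun s hs => le_trans (hdec s ⟨hs.1, le_trans hs.2 (min_le_right _ _)⟩) hle⟩)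
    exact this t₁ ⟨hu₀.2, le_rfl⟩
  have hlim : g t₁ ≤ g ts := by
    have hne : (𝓝[>] ts).NeBot := nhdsGT_neBot ts
    have htend : Tendsto g (𝓝[>] ts) (𝓝 (g ts)) :=
      ((hgc ts (le_trans h0a hats)).tendsto).mono_left nhdsWithin_le_nhds
    refine ge_of_tendsto htend ?_
    filter_upwards [Ioc_mem_nhdsGT_of_mem ⟨le_rfl, htst1⟩] with u hu
    exact hmain u hu
  rw [hgdef] at hlim hts1
  linarith


/-- Quantitative drop: near any `p ∈ U \ {0}` there are `r, S, d > 0` such that any trajectory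
visiting `ball p r` (with speed bound `M`) loses at least `d` of `V`-value in time `S`. -/
lemma local_drop (hf : ContDiff ℝ (⊤ : ℕ∞) f) (hV : ContDiff ℝ (⊤ : ℕ∞) V)
    (hc : ∀ x ∈ U, x ≠ 0 → ∃ k, 1 ≤ k ∧
      (∀ j, 1 ≤ j → j < k → lieD f V j x = 0) ∧ lieD f V k x < 0)
    {p : EuclideanSpace ℝ (Fin n)} (hp : p ∈ U) (hp0 : p ≠ 0) {M : ℝ} (hM : 0 < M) :
    ∃ r > 0, ∃ S > 0, ∃ d > 0, ∀ (x : ℝ → EuclideanSpace ℝ (Fin n)),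
      (∀ t, 0 ≤ t → HasDerivAt x (f (x t)) t) →
      ∀ t, 0 ≤ t → x t ∈ ball p r → (∀ s ∈ Icc t (t + S), ‖f (x s)‖ ≤ M) →
      V (x (t + S)) ≤ V (x t) - d := by
  obtain ⟨k, hk1, hzero, hneg⟩ := hc p hp hp0
  set L := lieD f V k p with hLdef
  have hcont : ContinuousAt (lieD f V k) p := (lieD_contDiff hf hV k).continuous.continuousAt
  obtain ⟨r₁', hr₁', hball₁⟩ : ∃ r > 0, ∀ y, dist y p < r → lieD f V k y < L / 2 := by
    have hmem : Iio (L / 2) ∈ 𝓝 (lieD f V k p) := Iio_mem_nhds (by rw [← hLdef]; linarith)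
    obtain ⟨r, hr, h⟩ := Metric.eventually_nhds_iff.1 (hcont.eventually_mem hmem)
    exact ⟨r, hr, fun y hy => h hy⟩
  set r₁ := r₁' / 3 with hr₁def
  have hr₁pos : 0 < r₁ := by positivity
  set S := min 1 (r₁ / M) with hSdef
  have hSpos : 0 < S := lt_min one_pos (by positivity)
  have hexpS : 0 < Real.exp S - 1 := by
    have := Real.add_one_lt_exp (ne_of_gt hSpos)
    linarith
  set c := -(L / 2) with hcdef
  have hcpos : 0 < c := by rw [hcdef]; linarith
  set η := c * S ^ k / (2 * (k.factorial : ℝ) * (Real.exp S - 1)) with hηdef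
  have hηpos : 0 < η := by
    apply div_pos (by positivity)
    positivity
  set W : Set (EuclideanSpace ℝ (Fin n)) :=
    ⋂ j ∈ Finset.Ico 1 k, {y | |lieD f V j y| < η} with hWdef
  have hWopen : IsOpen W := by
    apply isOpen_biInter_finset
    intro j _
    have : {y | |lieD f V j y| < η} = (fun y => |lieD f V j y|) ⁻¹' Iio η := rfl
    rw [this]
    exact isOpen_Iio.preimage ((lieD_contDiff hf hV j).continuous.abs)
  have hpW : p ∈ W := by
    rw [hWdef]
    simp only [mem_iInter, mem_setOf_eq, Finset.mem_Ico]
    intro j hj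
    rw [hzero j hj.1 hj.2]
    simpa using hηpos
  obtain ⟨r₂', hr₂', hball₂⟩ := Metric.isOpen_iff.1 hWopen p hpW
  refine ⟨min r₁ r₂', lt_min hr₁pos hr₂', S, hSpos, c * S ^ k / (2 * (k.factorial : ℝ)),
    by positivity, ?_⟩
  intro x hx t ht hxt hspeed
  -- trajectory stays in the ball of radius `2 r₁ < r₁'` during `[t, t+S]`
  have hmove : ∀ u ∈ Icc t (t + S), ‖x u - x t‖ ≤ M * (u - t) := by
    apply norm_image_sub_le_of_norm_deriv_le_segment' (f' := fun u => f (x u))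
    · intro u hu
      exact (hx u (by linarith [hu.1])).hasDerivWithinAt
    · intro u hu
      exact hspeed u ⟨hu.1, hu.2.le⟩
  have hstay : ∀ u ∈ Icc t (t + S), lieD f V k (x u) < L / 2 := by
    intro u hu
    apply hball₁
    have h1 : ‖x u - x t‖ ≤ M * S :=
      le_trans (hmove u hu) (by nlinarith [hu.2, hu.1, hM])
    have h2 : M * S ≤ r₁ := by
      have : S ≤ r₁ / M := min_le_right _ _
      calc M * S ≤ M * (r₁ / M) := by nlinarith
        _ = r₁ := by field_simp
    have h3 : dist (x t) p < r₁ := lt_of_lt_of_le (mem_ball.1 hxt) (min_le_left _ _)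
    calc dist (x u) p ≤ dist (x u) (x t) + dist (x t) p := dist_triangle _ _ _
      _ ≤ M * S + r₁ := by
          rw [dist_eq_norm]
          exact add_le_add (le_trans h1 le_rfl) h3.le
      _ ≤ r₁ + r₁ := by linarith
      _ < r₁' := by rw [hr₁def]; linarith
  have hxtW : x t ∈ W :=
    hball₂ (mem_ball.2 (lt_of_lt_of_le (mem_ball.1 hxt) (min_le_right _ _)))
  have hdrop := taylor_drop (G := fun j u => lieD f V j (x u)) (t₀ := t) (S := S) hk1 hSpos.le
    (c := c) hcpos.le hηpos.le
    (fun j _ u hu => lieD_hasDerivAt hf hV (hx u (by linarith [hu.1])) j)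
    (fun j hj1 hjk => by
      show |lieD f V j (x t)| ≤ η
      rw [hWdef] at hxtW
      simp only [mem_iInter, mem_setOf_eq, Finset.mem_Ico] at hxtW
      exact (hxtW j ⟨hj1, hjk⟩).le)
    (fun u hu => by
      show lieD f V k (x u) ≤ -c
      have := hstay u hu
      rw [hcdef]; linarith)
  have hdrop2 : V (x (t + S)) ≤ V (x t) + η * (Real.exp S - 1)
      - c * S ^ k / (k.factorial : ℝ) := hdrop
  have hηeq : η * (Real.exp S - 1) = c * S ^ k / (2 * (k.factorial : ℝ)) := by
    rw [hηdef]
    field_simp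
  rw [hηeq] at hdrop2
  have hfacpos : (0:ℝ) < (k.factorial : ℝ) := by positivity
  have : c * S ^ k / (2 * (k.factorial : ℝ)) = c * S ^ k / (k.factorial : ℝ) / 2 := by ring
  nlinarith [hdrop2]


/-- Core stability estimate. -/
lemma stability_core (hf : ContDiff ℝ (⊤ : ℕ∞) f) (hV : ContDiff ℝ (⊤ : ℕ∞) V) (ha : V 0 = 0)
    (hb : ∀ x ∈ U, x ≠ 0 → 0 < V x)
    (hc : ∀ x ∈ U, x ≠ 0 → ∃ k, 1 ≤ k ∧
      (∀ j, 1 ≤ j → j < k → lieD f V j x = 0) ∧ lieD f V k x < 0)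
    (hn : 0 < n) {ε₀ : ℝ} (hε₀ : 0 < ε₀) (hballU : closedBall 0 ε₀ ⊆ U)
    {ε : ℝ} (hε : 0 < ε) (hεε₀ : ε ≤ ε₀) :
    ∃ δ, 0 < δ ∧ δ ≤ ε ∧ ∀ x : ℝ → EuclideanSpace ℝ (Fin n),
      (∀ t : ℝ, 0 ≤ t → HasDerivAt x (f (x t)) t) → ‖x 0‖ < δ →
      ∀ t : ℝ, 0 ≤ t → ‖x t‖ < ε := by
  haveI : Nontrivial (EuclideanSpace ℝ (Fin n)) := by
    refine ⟨EuclideanSpace.single (⟨0, hn⟩ : Fin n) (1:ℝ), 0, fun h0 => ?_⟩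
    have h1 := congrArg (fun v => v (⟨0, hn⟩ : Fin n)) h0
    simp [EuclideanSpace.single_apply] at h1
  have hsphne : (sphere (0 : EuclideanSpace ℝ (Fin n)) ε).Nonempty :=
    NormedSpace.sphere_nonempty.mpr hε.le
  obtain ⟨z, hzmem, hzmin⟩ := (isCompact_sphere (0 : EuclideanSpace ℝ (Fin n)) ε).exists_isMinOn
    hsphne hV.continuous.continuousOn
  have hznorm : ‖z‖ = ε := mem_sphere_zero_iff_norm.1 hzmem
  have hzU : z ∈ U := hballU (by simp [mem_closedBall, dist_zero_right, hznorm, hεε₀])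
  have hz0 : z ≠ 0 := fun h => by rw [h, norm_zero] at hznorm; linarith
  set m := V z with hmdef
  have hm : 0 < m := hb z hzU hz0
  obtain ⟨δ₁, hδ₁, hδball⟩ : ∃ δ₁ > 0, ∀ y : EuclideanSpace ℝ (Fin n), dist y 0 < δ₁ → V y < m := by
    have : Iio m ∈ 𝓝 (V 0) := Iio_mem_nhds (by rw [ha]; exact hm)
    obtain ⟨δ₁, hδ₁, h⟩ := Metric.eventually_nhds_iff.1 (hV.continuous.continuousAt.eventually_mem this)
    exact ⟨δ₁, hδ₁, fun y hy => h hy⟩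
  refine ⟨min δ₁ ε, lt_min hδ₁ hε, min_le_right _ _, ?_⟩
  intro x hx h0 t ht
  by_contra hcon
  push_neg at hcon
  have h0ε : ‖x 0‖ < ε := lt_of_lt_of_le h0 (min_le_right _ _)
  have h0m : V (x 0) < m := by
    apply hδball
    rw [dist_zero_right]
    exact lt_of_lt_of_le h0 (min_le_left _ _)
  have hxc : ∀ s, 0 ≤ s → ContinuousAt x s := fun s hs => (hx s hs).continuousAt
  set Z : Set ℝ := Icc 0 t ∩ (fun s => ‖x s‖) ⁻¹' Ici ε with hZdef
  have hZclosed : IsClosed Z := by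
    apply ContinuousOn.preimage_isClosed_of_isClosed ?_ isClosed_Icc isClosed_Ici
    exact fun u hu => ((hxc u hu.1).norm).continuousWithinAt
  have htZ : t ∈ Z := ⟨⟨ht, le_rfl⟩, hcon⟩
  have hZne : Z.Nonempty := ⟨t, htZ⟩
  have hZbdd : BddBelow Z := ⟨0, fun u hu => hu.1.1⟩
  set ts := sInf Z with htsdef
  have htsZ : ts ∈ Z := hZclosed.csInf_mem hZne hZbdd
  have hts0 : 0 ≤ ts := htsZ.1.1
  have htsgt : 0 < ts := by
    rcases eq_or_lt_of_le hts0 with h | h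
    · exfalso; have := htsZ.2; rw [← h] at this; exact absurd this (not_le.2 h0ε)
    · exact h
  have hlt : ∀ s ∈ Ico 0 ts, ‖x s‖ < ε := by
    intro s hs
    by_contra hge
    push_neg at hge
    have hsZ : s ∈ Z := ⟨⟨hs.1, le_trans hs.2.le htsZ.1.2⟩, hge⟩
    have := csInf_le hZbdd hsZ
    rw [← htsdef] at this
    linarith [hs.2]
  have htsle : ‖x ts‖ ≤ ε := by
    have hne : (𝓝[<] ts).NeBot := nhdsLT_neBot ts
    have htend : Tendsto (fun s => ‖x s‖) (𝓝[<] ts) (𝓝 ‖x ts‖) :=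
      ((hxc ts hts0).norm.tendsto).mono_left nhdsWithin_le_nhds
    refine le_of_tendsto htend ?_
    filter_upwards [Ioo_mem_nhdsLT_of_mem (⟨htsgt, le_rfl⟩ : ts ∈ Ioc (0:ℝ) ts)] with u hu
    exact (hlt u ⟨hu.1.le, hu.2⟩).le
  have htseq : ‖x ts‖ = ε := le_antisymm htsle htsZ.2
  have hxU : ∀ s ∈ Icc 0 ts, x s ∈ U := by
    intro s hs
    apply hballU
    rw [mem_closedBall, dist_zero_right]
    rcases lt_or_eq_of_le hs.2 with h | h
    · exact le_trans (hlt s ⟨hs.1, h⟩).le hεε₀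
    · rw [h, htseq]; exact hεε₀
  have hVle := V_le_initial hf hV ha hb hc hx le_rfl hts0 hxU ts ⟨hts0, le_rfl⟩
  have hmle : m ≤ V (x ts) := hzmin (mem_sphere_zero_iff_norm.2 htseq)
  linarith

end traj

/-- Relaxed Lyapunov function theorem (Theorem on asymptotic stability via RLFs). -/
theorem relaxed_lyapunov_asymptotic_stability {n : ℕ}
    (f : EuclideanSpace ℝ (Fin n) → EuclideanSpace ℝ (Fin n))
    (hf : ContDiff ℝ (⊤ : ℕ∞) f) (hf0 : f 0 = 0)
    (U : Set (EuclideanSpace ℝ (Fin n))) (hU : IsOpen U) (h0U : (0 : EuclideanSpace ℝ (Fin n)) ∈ U)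
    (V : EuclideanSpace ℝ (Fin n) → ℝ) (hV : ContDiff ℝ (⊤ : ℕ∞) V)
    (ha : V 0 = 0)
    (hb : ∀ x ∈ U, x ≠ 0 → 0 < V x)
    (hc : ∀ x ∈ U, x ≠ 0 → ∃ k, 1 ≤ k ∧
      (∀ j, 1 ≤ j → j < k → lieD f V j x = 0) ∧ lieD f V k x < 0) :
    (∀ ε > (0 : ℝ), ∃ δ > (0 : ℝ), ∀ x : ℝ → EuclideanSpace ℝ (Fin n),
      (∀ t : ℝ, 0 ≤ t → HasDerivAt x (f (x t)) t) → ‖x 0‖ < δ →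
      ∀ t : ℝ, 0 ≤ t → ‖x t‖ < ε) ∧
    (∃ δ > (0 : ℝ), ∀ x : ℝ → EuclideanSpace ℝ (Fin n),
      (∀ t : ℝ, 0 ≤ t → HasDerivAt x (f (x t)) t) → ‖x 0‖ < δ →
      Tendsto x atTop (𝓝 0)) := by
  rcases Nat.eq_zero_or_pos n with hn | hn
  · subst hn
    have hzero : ∀ y : EuclideanSpace ℝ (Fin 0), y = 0 := fun y => by ext i; exact i.elim0
    constructor
    · intro ε hε
      exact ⟨1, one_pos, fun x _ _ t _ => by rw [hzero (x t), norm_zero]; exact hε⟩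
    · refine ⟨1, one_pos, fun x _ _ => ?_⟩
      have hx0 : x = fun _ => 0 := funext fun t => hzero (x t)
      rw [hx0]
      exact tendsto_const_nhds
  obtain ⟨ρU, hρU, hρball⟩ := Metric.isOpen_iff.1 hU 0 h0U
  set ε₀ := ρU / 2 with hε₀def
  have hε₀ : 0 < ε₀ := by positivity
  have hball : closedBall (0 : EuclideanSpace ℝ (Fin n)) ε₀ ⊆ U :=
    (closedBall_subset_ball (by rw [hε₀def]; linarith)).trans hρball
  haveI : Nontrivial (EuclideanSpace ℝ (Fin n)) := by
    refine ⟨EuclideanSpace.single (⟨0, hn⟩ : Fin n) (1:ℝ), 0, fun h0 => ?_⟩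
    have h1 := congrArg (fun v => v (⟨0, hn⟩ : Fin n)) h0
    simp [EuclideanSpace.single_apply] at h1
  constructor
  · intro ε hε
    obtain ⟨δ, hδ, hδε, hstab⟩ := stability_core hf hV ha hb hc hn hε₀ hball
      (lt_min hε hε₀) (min_le_right ε ε₀)
    exact ⟨δ, hδ, fun x hx h0 t ht =>
      lt_of_lt_of_le (hstab x hx h0 t ht) (min_le_left _ _)⟩
  obtain ⟨δ, hδ, hδε, hstab⟩ := stability_core hf hV ha hb hc hn hε₀ hball hε₀ le_rfl
  refine ⟨δ, hδ, fun x hx h0 => ?_⟩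
  have htraj : ∀ t, 0 ≤ t → ‖x t‖ < ε₀ := hstab x hx h0
  have htraj' : ∀ t, 0 ≤ t → x t ∈ closedBall (0 : EuclideanSpace ℝ (Fin n)) ε₀ :=
    fun t ht => by rw [mem_closedBall, dist_zero_right]; exact (htraj t ht).le
  have hxU : ∀ t, 0 ≤ t → x t ∈ U := fun t ht => hball (htraj' t ht)
  have hmono : ∀ s t', 0 ≤ s → s ≤ t' → V (x t') ≤ V (x s) := fun s t' hs hst =>
    V_le_initial hf hV ha hb hc hx hs hst
      (fun u hu => hxU u (le_trans hs hu.1)) t' ⟨hst, le_rfl⟩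
  obtain ⟨C, hC⟩ := (isCompact_closedBall (0 : EuclideanSpace ℝ (Fin n)) ε₀).exists_bound_of_continuousOn
    hf.continuous.continuousOn
  set M := max C 1 with hMdef
  have hM : 0 < M := lt_of_lt_of_le one_pos (le_max_right _ _)
  have hMb : ∀ y ∈ closedBall (0 : EuclideanSpace ℝ (Fin n)) ε₀, ‖f y‖ ≤ M :=
    fun y hy => le_trans (hC y hy) (le_max_left _ _)
  -- V along the trajectory gets below every positive level
  have hclaim : ∀ ρ, 0 < ρ → ∃ T, 0 ≤ T ∧ V (x T) < ρ := by
    intro ρ hρ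
    by_contra hcontra
    push_neg at hcontra
    set K := closedBall (0 : EuclideanSpace ℝ (Fin n)) ε₀ ∩ V ⁻¹' Ici ρ with hKdef
    have hKcomp : IsCompact K :=
      (isCompact_closedBall _ _).inter_right (isClosed_Ici.preimage hV.continuous)
    have hKU : K ⊆ U := fun y hy => hball hy.1
    have hK0 : ∀ y ∈ K, y ≠ 0 := by
      intro y hy h
      have h2 := hy.2
      rw [h] at h2
      simp only [mem_preimage, mem_Ici, ha] at h2
      linarith
    have hloc : ∀ p ∈ K, ∃ r S d : ℝ, 0 < r ∧ 0 < S ∧ 0 < d ∧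
        ∀ (y : ℝ → EuclideanSpace ℝ (Fin n)),
          (∀ t, 0 ≤ t → HasDerivAt y (f (y t)) t) →
          ∀ t, 0 ≤ t → y t ∈ ball p r → (∀ s ∈ Icc t (t + S), ‖f (y s)‖ ≤ M) →
          V (y (t + S)) ≤ V (y t) - d := by
      intro p hp
      obtain ⟨r, hr, S, hS, d, hd, hP⟩ := local_drop hf hV hc (hKU hp) (hK0 p hp) hM
      exact ⟨r, S, d, hr, hS, hd, hP⟩
    choose! r S d hprop using hloc
    have hcover : K ⊆ ⋃ p ∈ K, ball p (r p) :=
      fun y hy => mem_biUnion hy (mem_ball_self (hprop y hy).1)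
    obtain ⟨b, hbK, hbfin, hbcov⟩ := hKcomp.elim_finite_subcover_image
      (fun p _ => isOpen_ball) hcover
    have hx0K : x 0 ∈ K := ⟨htraj' 0 le_rfl, hcontra 0 le_rfl⟩
    have hbne : b.Nonempty := by
      obtain ⟨p, hp, -⟩ := mem_iUnion₂.1 (hbcov hx0K)
      exact ⟨p, hp⟩
    set F := hbfin.toFinset with hFdef
    have hFne : F.Nonempty := by rwa [hFdef, Set.Finite.toFinset_nonempty]
    have hmemF : ∀ p, p ∈ F ↔ p ∈ b := fun p => hbfin.mem_toFinset
    set Smax := F.sup' hFne S with hSmaxdef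
    set dmin := F.inf' hFne d with hdmindef
    have hdmin : 0 < dmin := by
      obtain ⟨p, hpF, hpe⟩ := F.exists_mem_eq_inf' hFne d
      rw [hdmindef, hpe]
      exact (hprop p (hbK ((hmemF p).1 hpF))).2.2.1
    have hSmax : 0 < Smax := by
      obtain ⟨p, hpF, hpe⟩ := F.exists_mem_eq_sup' hFne S
      rw [hSmaxdef, hpe]
      exact (hprop p (hbK ((hmemF p).1 hpF))).2.1
    have hstep : ∀ t, 0 ≤ t → V (x (t + Smax)) ≤ V (x t) - dmin := by
      intro t ht
      have hxtK : x t ∈ K := ⟨htraj' t ht, hcontra t ht⟩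
      obtain ⟨p, hpb, hpball⟩ := mem_iUnion₂.1 (hbcov hxtK)
      have hpK := hbK hpb
      obtain ⟨hrp, hSp, hdp, hPp⟩ := hprop p hpK
      have hdrop := hPp x hx t ht hpball
        (fun s hs => hMb (x s) (htraj' s (by linarith [hs.1])))
      have hSle : S p ≤ Smax := Finset.le_sup' S ((hmemF p).2 hpb)
      have hdle : dmin ≤ d p := Finset.inf'_le d ((hmemF p).2 hpb)
      have hm2 := hmono (t + S p) (t + Smax) (by linarith) (by linarith)
      linarith
    have hiter : ∀ m : ℕ, V (x ((m : ℝ) * Smax)) ≤ V (x 0) - (m : ℝ) * dmin := by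
      intro m
      induction m with
      | zero => simp
      | succ m ih =>
        have h2 : (0:ℝ) ≤ (m:ℝ) * Smax := by positivity
        have h3 := hstep ((m:ℝ) * Smax) h2
        have h1 : ((m+1 : ℕ) : ℝ) * Smax = (m:ℝ) * Smax + Smax := by push_cast; ring
        rw [h1]
        push_cast
        linarith
    obtain ⟨m, hm⟩ := exists_nat_gt (V (x 0) / dmin)
    have hmgt : V (x 0) < (m:ℝ) * dmin := by
      rw [div_lt_iff₀ hdmin] at hm
      linarith
    have h3 := hiter m
    have h4 := hcontra ((m:ℝ) * Smax) (by positivity)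
    linarith
  -- conclude convergence
  rw [Metric.tendsto_atTop]
  intro ε₁ hε₁
  set ε₂ := min ε₁ ε₀ with hε₂def
  have hε₂ : 0 < ε₂ := lt_min hε₁ hε₀
  set A := closedBall (0 : EuclideanSpace ℝ (Fin n)) ε₀ ∩ (fun y => ‖y‖) ⁻¹' Ici ε₂ with hAdef
  have hAcomp : IsCompact A :=
    (isCompact_closedBall _ _).inter_right (isClosed_Ici.preimage continuous_norm)
  have hAne : A.Nonempty := by
    have hsph : (sphere (0 : EuclideanSpace ℝ (Fin n)) ε₂).Nonempty :=
      NormedSpace.sphere_nonempty.mpr hε₂.le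
    obtain ⟨y₂, hy₂⟩ := hsph
    have hy₂n : ‖y₂‖ = ε₂ := mem_sphere_zero_iff_norm.1 hy₂
    refine ⟨y₂, ?_, ?_⟩
    · rw [mem_closedBall, dist_zero_right, hy₂n]; exact min_le_right _ _
    · simp only [mem_preimage, mem_Ici, hy₂n]; exact le_rfl
  obtain ⟨z₁, hz₁A, hz₁min⟩ := hAcomp.exists_isMinOn hAne hV.continuous.continuousOn
  have hz₁U : z₁ ∈ U := hball hz₁A.1
  have hz₁0 : z₁ ≠ 0 := by
    intro h
    have h2 := hz₁A.2
    rw [h] at h2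
    simp only [mem_preimage, mem_Ici, norm_zero] at h2
    linarith
  have hm₁ : 0 < V z₁ := hb z₁ hz₁U hz₁0
  obtain ⟨T, hT0, hVT⟩ := hclaim (V z₁) hm₁
  refine ⟨T, fun t ht' => ?_⟩
  have ht0 : 0 ≤ t := le_trans hT0 ht'
  have hVt : V (x t) < V z₁ := lt_of_le_of_lt (hmono T t hT0 ht') hVT
  rw [dist_zero_right]
  by_contra hge
  push_neg at hge
  have hxtA : x t ∈ A := by
    refine ⟨htraj' t ht0, ?_⟩
    simp only [mem_preimage, mem_Ici]
    exact le_trans (min_le_left _ _) hge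
  have := hz₁min hxtA
  simp only [IsMinOn, IsMinFilter] at this
  exact absurd hVt (not_lt.2 (hz₁min hxtA))
end

section
/- Let f : Fin n → ℝ[x₁,…,xₙ] be a polynomial vector field and let p ∈ ℝ[x₁,…,xₙ]. Define the Lie derivative L_f p = Σᵢ (∂p/∂xᵢ)·fᵢ and its iterates L⁰_f p = p, L^k_f p = L_f(L^{k-1}_f p). If L^i_f p belongs to the ideal ⟨L¹_f p, …, L^{i-1}_f p⟩ of ℝ[x₁,…,xₙ] for some i ≥ 2, then for every m > i, L^m_f p belongs to ⟨L¹_f p, …, L^{i-1}_f p⟩. -/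
open MvPolynomial

/-- Lie derivative of a polynomial along a polynomial vector field:
`L_f p = Σᵢ (∂p/∂xᵢ)·fᵢ`. -/
noncomputable def lieDeriv {n : ℕ} (f : Fin n → MvPolynomial (Fin n) ℝ)
    (p : MvPolynomial (Fin n) ℝ) : MvPolynomial (Fin n) ℝ :=
  ∑ i, pderiv i p * f i

lemma lieDeriv_mul {n : ℕ} (f : Fin n → MvPolynomial (Fin n) ℝ)
    (a b : MvPolynomial (Fin n) ℝ) :
    lieDeriv f (a * b) = lieDeriv f a * b + a * lieDeriv f b := by
  unfold lieDeriv
  rw [Finset.mul_sum, Finset.sum_mul, ← Finset.sum_add_distrib]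
  exact Finset.sum_congr rfl fun i _ => by rw [pderiv_mul]; ring

/-- Fixed Point Theorem: if `L^i_f p ∈ ⟨L¹_f p, …, L^{i-1}_f p⟩` then
`L^m_f p ∈ ⟨L¹_f p, …, L^{i-1}_f p⟩` for all `m > i`. -/
theorem lie_fixed_point {n : ℕ} (f : Fin n → MvPolynomial (Fin n) ℝ)
    (p : MvPolynomial (Fin n) ℝ) (i : ℕ) (hi : 2 ≤ i)
    (h : (lieDeriv f)^[i] p ∈
      Ideal.span ((fun j => (lieDeriv f)^[j] p) '' Set.Icc 1 (i - 1))) :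
    ∀ m, i < m → (lieDeriv f)^[m] p ∈
      Ideal.span ((fun j => (lieDeriv f)^[j] p) '' Set.Icc 1 (i - 1)) := by
  set I := Ideal.span ((fun j => (lieDeriv f)^[j] p) '' Set.Icc 1 (i - 1)) with hI
  -- I is stable under lieDeriv
  have key : ∀ q ∈ I, lieDeriv f q ∈ I := by
    intro q hq
    have : q ∈ I ∧ lieDeriv f q ∈ I := by
      refine Submodule.span_induction (p := fun x _ => x ∈ I ∧ lieDeriv f x ∈ I)
        ?_ ?_ ?_ ?_ hq
      · rintro x ⟨j, hj, rfl⟩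
        constructor
        · exact Ideal.subset_span ⟨j, hj, rfl⟩
        · rw [← Function.iterate_succ_apply' (lieDeriv f) j p]
          rcases lt_or_eq_of_le hj.2 with hlt | heq
          · exact Ideal.subset_span ⟨j + 1, ⟨le_trans hj.1 (Nat.le_succ j),
              Nat.succ_le_of_lt hlt⟩, rfl⟩
          · have hji : j.succ = i := by omega
            rw [hji]; exact h
      · constructor <;> simp [lieDeriv]
      · rintro x y _ _ ⟨hx1, hx2⟩ ⟨hy1, hy2⟩
        refine ⟨I.add_mem hx1 hy1, ?_⟩
        have : lieDeriv f (x + y) = lieDeriv f x + lieDeriv f y := by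
          simp [lieDeriv, add_mul, Finset.sum_add_distrib]
        rw [this]; exact I.add_mem hx2 hy2
      · rintro r x _ ⟨hx1, hx2⟩
        refine ⟨I.smul_mem r hx1, ?_⟩
        rw [smul_eq_mul, lieDeriv_mul]
        exact I.add_mem (I.mul_mem_left _ hx1) (I.mul_mem_left _ hx2)
    exact this.2
  intro m hm
  induction m with
  | zero => omega
  | succ k ih =>
    rw [Function.iterate_succ_apply']
    rcases lt_or_eq_of_le (Nat.lt_succ_iff.mp hm) with hlt | heq
    · exact key _ (ih hlt)
    · rw [← heq]; exact key _ h
end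

section
/- Let f : Fin n → ℝ[x₁,…,xₙ] be a polynomial vector field and let p ∈ ℝ[x₁,…,xₙ]. Then there exists i ≥ 1 such that L^{i+1}_f p belongs to the ideal ⟨L¹_f p, …, L^i_f p⟩ of ℝ[x₁,…,xₙ]; equivalently, the set {i ∈ ℕ : i ≥ 1 and L^{i+1}_f p ∈ ⟨L¹_f p, …, L^i_f p⟩} is nonempty, so the number N_{p,f} = min of this set is well defined. -/
open MvPolynomial

/-- There exists `i ≥ 1` with `L^{i+1}_f p ∈ ⟨L¹_f p, …, L^i_f p⟩`, so
`N_{p,f}` is well defined. -/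
theorem lie_ideal_stabilizes {n : ℕ} (f : Fin n → MvPolynomial (Fin n) ℝ)
    (p : MvPolynomial (Fin n) ℝ) :
    {i : ℕ | 1 ≤ i ∧ (lieDeriv f)^[i + 1] p ∈
      Ideal.span ((fun j => (lieDeriv f)^[j] p) '' Set.Icc 1 i)}.Nonempty := by
  have hmono : Monotone (fun i : ℕ =>
      Ideal.span ((fun j => (lieDeriv f)^[j] p) '' Set.Icc 1 i)) := by
    intro a b hab
    exact Ideal.span_mono (Set.image_mono (Set.Icc_subset_Icc le_rfl hab))
  obtain ⟨N, hN⟩ := monotone_stabilizes_iff_noetherian.mpr inferInstance ⟨_, hmono⟩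
  refine ⟨max N 1, le_max_right _ _, ?_⟩
  have ha := hN (max N 1) (le_max_left _ _)
  have hb := hN (max N 1 + 1) (le_trans (le_max_left _ _) (Nat.le_succ _))
  simp only [OrderHom.coe_mk] at ha hb
  rw [← ha, hb]
  exact Ideal.subset_span ⟨max N 1 + 1, ⟨Nat.le_add_left 1 _, le_rfl⟩, rfl⟩
end

section
/- Let f : Fin n → ℝ[x₁,…,xₙ] be a polynomial vector field, p ∈ ℝ[x₁,…,xₙ], and let N ≥ 1 satisfy L^{N+1}_f p ∈ ⟨L¹_f p, …, L^N_f p⟩. Then for every point a ∈ ℝⁿ: if the evaluations (L^j_f p)(a) vanish for all 1 ≤ j ≤ N, then (L^m_f p)(a) = 0 for all m ≥ 1. Consequently, if the pointwise rank γ_{p,f}(a) = min{k ≥ 1 : (L^k_f p)(a) ≠ 0} is finite, then γ_{p,f}(a) ≤ N. -/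
/-! The ideal `J = ⟨L¹_f p, …, L^N_f p⟩` is stable under `L_f`: the Leibniz rule reduces this to
the generators, which `L_f` maps to the next generator or, for the last one, into `J` by hypothesis.
Hence every `L^m_f p` with `m ≥ 1` lies in `J`, and so vanishes wherever the generators do. -/

open MvPolynomial

namespace Derivation

variable {R A : Type*} [CommSemiring R] [CommSemiring A] [Algebra R A] (D : Derivation R A A)

theorem map_mem_span_of_forall_mem {S : Set A} (hS : ∀ s ∈ S, D s ∈ Ideal.span S) {x : A}
    (hx : x ∈ Ideal.span S) : D x ∈ Ideal.span S := by
  induction hx using Submodule.span_induction with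
  | mem s hs => exact hS s hs
  | zero => simp
  | add x y _ _ hx hy => rw [map_add]; exact add_mem hx hy
  | smul r x hx hDx =>
    rw [smul_eq_mul, D.leibniz, smul_eq_mul, smul_eq_mul]
    exact add_mem (Ideal.mul_mem_left _ r hDx) (Ideal.mul_mem_right _ _ hx)

theorem iterate_mem_span_of_iterate_succ_mem {p : A} {N : ℕ}
    (h : D^[N + 1] p ∈ Ideal.span ((fun j => D^[j] p) '' Set.Icc 1 N)) {m : ℕ} (hm : 1 ≤ m) :
    D^[m] p ∈ Ideal.span ((fun j => D^[j] p) '' Set.Icc 1 N) := by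
  have stable : ∀ s ∈ (fun j => D^[j] p) '' Set.Icc 1 N,
      D s ∈ Ideal.span ((fun j => D^[j] p) '' Set.Icc 1 N) := by
    rintro _ ⟨j, ⟨hj, hjN⟩, rfl⟩
    rw [← Function.iterate_succ_apply' D]
    rcases hjN.lt_or_eq with hjN | rfl
    · exact Ideal.subset_span ⟨j + 1, ⟨by omega, hjN⟩, rfl⟩
    · exact h
  rcases le_or_gt m N with hmN | hNm
  · exact Ideal.subset_span ⟨m, ⟨hm, hmN⟩, rfl⟩
  · induction m, Nat.succ_le_of_lt hNm using Nat.le_induction with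
    | base => exact h
    | succ k hk ih =>
      rw [Function.iterate_succ_apply']
      exact D.map_mem_span_of_forall_mem stable (ih (by omega) (by omega))

end Derivation

noncomputable def lieDerivation {n : ℕ} (f : Fin n → MvPolynomial (Fin n) ℝ) :
    Derivation ℝ (MvPolynomial (Fin n) ℝ) (MvPolynomial (Fin n) ℝ) :=
  ∑ i, f i • pderiv i

theorem coe_lieDerivation {n : ℕ} (f : Fin n → MvPolynomial (Fin n) ℝ) :
    ⇑(lieDerivation f) = lieDeriv f := by
  ext p : 1
  rw [lieDerivation, ← Derivation.coeFnAddMonoidHom_apply, map_sum, Finset.sum_apply]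
  simp [lieDeriv, mul_comm]

theorem lie_rank_theorem_general {n : ℕ} (f : Fin n → MvPolynomial (Fin n) ℝ)
    (p : MvPolynomial (Fin n) ℝ) (N : ℕ)
    (h : (lieDeriv f)^[N + 1] p ∈
      Ideal.span ((fun j => (lieDeriv f)^[j] p) '' Set.Icc 1 N)) :
    (∀ a : Fin n → ℝ,
      (∀ j, 1 ≤ j → j ≤ N → eval a ((lieDeriv f)^[j] p) = 0) →
      ∀ m, 1 ≤ m → eval a ((lieDeriv f)^[m] p) = 0) ∧
    (∀ a : Fin n → ℝ,
      {k : ℕ | 1 ≤ k ∧ eval a ((lieDeriv f)^[k] p) ≠ 0}.Nonempty →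
      sInf {k : ℕ | 1 ≤ k ∧ eval a ((lieDeriv f)^[k] p) ≠ 0} ≤ N) := by
  rw [← coe_lieDerivation] at h ⊢
  have vanish : ∀ a : Fin n → ℝ,
      (∀ j, 1 ≤ j → j ≤ N → eval a ((lieDerivation f)^[j] p) = 0) →
      ∀ m, 1 ≤ m → eval a ((lieDerivation f)^[m] p) = 0 := by
    intro a ha m hm
    have hJ : Ideal.span ((fun j => (lieDerivation f)^[j] p) '' Set.Icc 1 N) ≤
        RingHom.ker (eval a) :=
      Ideal.span_le.mpr <| by rintro _ ⟨j, ⟨hj, hjN⟩, rfl⟩; exact ha j hj hjN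
    exact hJ ((lieDerivation f).iterate_mem_span_of_iterate_succ_mem h hm)
  refine ⟨vanish, fun a hne => ?_⟩
  by_contra! hN
  obtain ⟨k, hk, hk0⟩ := hne
  refine hk0 (vanish a (fun j hj hjN => ?_) k hk)
  by_contra hj0
  exact Nat.notMem_of_lt_sInf (hjN.trans_lt hN) ⟨hj, hj0⟩

/-- Rank Theorem: if `L^{N+1}_f p ∈ ⟨L¹_f p, …, L^N_f p⟩` then at any point where
the first `N` Lie derivatives vanish, all the Lie derivatives of order `≥ 1` vanish;
consequently, if the pointwise rank `γ_{p,f}(a) = min{k ≥ 1 : (L^k_f p)(a) ≠ 0}`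
is finite then it is at most `N`. -/
theorem lie_rank_theorem {n : ℕ} (f : Fin n → MvPolynomial (Fin n) ℝ)
    (p : MvPolynomial (Fin n) ℝ) (N : ℕ) (hN : 1 ≤ N)
    (h : (lieDeriv f)^[N + 1] p ∈
      Ideal.span ((fun j => (lieDeriv f)^[j] p) '' Set.Icc 1 N)) :
    (∀ a : Fin n → ℝ,
      (∀ j, 1 ≤ j → j ≤ N → eval a ((lieDeriv f)^[j] p) = 0) →
      ∀ m, 1 ≤ m → eval a ((lieDeriv f)^[m] p) = 0) ∧
    (∀ a : Fin n → ℝ,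
      {k : ℕ | 1 ≤ k ∧ eval a ((lieDeriv f)^[k] p) ≠ 0}.Nonempty →
      sInf {k : ℕ | 1 ≤ k ∧ eval a ((lieDeriv f)^[k] p) ≠ 0} ≤ N) :=
  lie_rank_theorem_general f p N h
end
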